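/- Suppose λᵢ < 0 for i ≤ q and λᵢ > 0 for i > q, and let Ψ_α := √(2^{|α|}[λ]^{α+1}/(πⁿ α!)) · z^α_q e^{−Σᵢ|λᵢ||zⁱ|²} for α ∈ ℕ^n, where z^α_q := (\bar{z}¹)^{α₁}⋯(\bar{z}^q)^{α_q}(z^{q+1})^{α_{q+1}}⋯(zⁿ)^{α_n} and [λ]^{α+1} := ∏ᵢ|λᵢ|^{αᵢ+1}. Then {Ψ_α}_{α∈ℕⁿ} is an orthonormal family in L²(ℂⁿ, 2ⁿdm) and Σ_α Ψ_α(z)\overline{Ψ_α(w)} = (|λ₁⋯λₙ|/πⁿ) e^{2(Σᵢ₌₁^q |λᵢ|\bar{z}ⁱwⁱ + Σ_{i>q} |λᵢ|zⁱ\bar{w}ⁱ) − Σᵢ|λᵢ|(|zⁱ|²+|wⁱ|²)} for all z, w ∈ ℂⁿ. -/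

import Mathlib

/-!
Write `ψ_{c,a}(ζ) = √(2^a c^{a+1}/(π a!)) ζ^a e^{-c|ζ|²}`. Then `Ψ_α` is the product over `i` of
`ψ_{|λᵢ|,αᵢ}` evaluated at `z̄ⁱ` for `i < q` and at `zⁱ` otherwise, so both claims reduce to one
complex variable. Orthonormality follows from Fubini and the Gaussian moments
`∫ ζ^a ζ̄^b e^{-2c|ζ|²} = δ_{ab} π a!/(2c)^{a+1}`: off the diagonal a rotation of the plane changes the
sign of the integral, on the diagonal it is a Gamma integral. For the kernel,
`ψ_{c,a}(ζ) · conj ψ_{c,a}(ω) = (c/π) e^{-c(|ζ|²+|ω|²)} (2cζω̄)^a/a!` is a term of an exponential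
series, and absolute convergence lets the sum over `ℕⁿ` split into the product of the `n` sums.
-/

open MeasureTheory

/-- The model harmonic forms
`Ψ_α = √(2^{|α|}[λ]^{α+1}/(πⁿ α!)) ⋅ z^α_q ⋅ e^{−Σᵢ|λᵢ||zⁱ|²}` (scalar coefficient), where
`z^α_q := (z̄¹)^{α₁}⋯(z̄^q)^{α_q}(z^{q+1})^{α_{q+1}}⋯(zⁿ)^{α_n}`. -/
noncomputable def psi (n q : ℕ) (lam : Fin n → ℝ) (α : Fin n → ℕ) (z : Fin n → ℂ) : ℂ :=
  (Real.sqrt ((2 : ℝ) ^ (∑ i, α i) * (∏ i, |lam i| ^ (α i + 1)) /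
      (Real.pi ^ n * ∏ i, (Nat.factorial (α i) : ℝ))) : ℂ)
    * (∏ i : Fin n, (if (i : ℕ) < q then (starRingEnd ℂ) (z i) else z i) ^ α i)
    * Complex.exp (-((∑ i, |lam i| * ‖z i‖ ^ 2 : ℝ) : ℂ))

open ComplexConjugate Nat

theorem summable_norm_prod_pi {R β : Type*} [NormedCommRing R] :
    ∀ {n : ℕ} (f : Fin n → β → R), (∀ i, Summable fun b => ‖f i b‖) →
      Summable fun x : Fin n → β => ‖∏ i, f i (x i)‖
  | 0, _, _ => .of_finite
  | n + 1, f, hf => by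
    rw [← (Fin.consEquiv fun _ => β).summable_iff]
    simpa [Function.comp_def, Fin.consEquiv, Fin.prod_univ_succ] using
      (hf 0).mul_norm (summable_norm_prod_pi (fun i => f i.succ) fun i => hf i.succ)

theorem tsum_prod_pi {R β : Type*} [NormedCommRing R] [CompleteSpace R] :
    ∀ {n : ℕ} (f : Fin n → β → R), (∀ i, Summable fun b => ‖f i b‖) →
      ∑' x : Fin n → β, ∏ i, f i (x i) = ∏ i, ∑' b, f i b
  | 0, _, _ => by simp
  | n + 1, f, hf => by
    rw [← (Fin.consEquiv fun _ => β).tsum_eq, Fin.prod_univ_succ,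
      ← tsum_prod_pi (fun i => f i.succ) (fun i => hf i.succ),
      tsum_mul_tsum_of_summable_norm (hf 0)
        (summable_norm_prod_pi (fun i => f i.succ) fun i => hf i.succ)]
    simp [Fin.consEquiv, Fin.prod_univ_succ]

theorem integral_norm_pow_mul_exp_neg_mul_sq {c : ℝ} (hc : 0 < c) (a : ℕ) :
    ∫ ζ : ℂ, ‖ζ‖ ^ (2 * a) * Real.exp (-c * ‖ζ‖ ^ 2) = Real.pi * a ! / c ^ (a + 1) := by
  have h := Complex.integral_rpow_mul_exp_neg_mul_rpow (p := 2) (q := (2 * a : ℕ)) (b := c)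
    one_le_two (by linarith [(Nat.cast_nonneg (2 * a) : (0 : ℝ) ≤ (2 * a : ℕ))]) hc
  simp only [Real.rpow_two, Real.rpow_natCast] at h
  rw [h, show ((2 * a : ℕ) + 2 : ℝ) / 2 = a + 1 by push_cast; ring,
    show -((2 * a : ℕ) + 2 : ℝ) / 2 = -(a + 1 : ℕ) by push_cast; ring,
    Real.rpow_neg hc.le, Real.rpow_natCast, Real.Gamma_nat_eq_factorial]
  field_simp

theorem integral_pow_mul_conj_pow_mul_exp_of_ne (c : ℝ) {a b : ℕ} (hab : a ≠ b) :
    ∫ ζ : ℂ, ζ ^ a * conj ζ ^ b * Complex.exp (-(c * ‖ζ‖ ^ 2)) = 0 := by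
  set f : ℂ → ℂ := fun ζ => ζ ^ a * conj ζ ^ b * Complex.exp (-(c * ‖ζ‖ ^ 2))
  -- rotating by `u = e^{iθ}` multiplies `f` by `e^{i(a-b)θ}`, which is `-1` for `θ = π/(a-b)`
  have hab' : (a : ℝ) - b ≠ 0 := sub_ne_zero.mpr (mod_cast hab)
  set u : Circle := Circle.exp (Real.pi / (a - b))
  have hu : (u : ℂ) ^ a * conj (u : ℂ) ^ b = -1 := by
    rw [Circle.coe_exp, ← Complex.exp_conj, ← Complex.exp_nat_mul, ← Complex.exp_nat_mul,
      ← Complex.exp_add, ← Complex.exp_pi_mul_I]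
    congr 1
    simp only [map_mul, Complex.conj_ofReal, Complex.conj_I]
    have : (a : ℂ) * (↑(Real.pi / (a - b)) * Complex.I) + b * (↑(Real.pi / (a - b)) * -Complex.I)
        = ↑(((a : ℝ) - b) * (Real.pi / (a - b))) * Complex.I := by push_cast; ring
    rw [this, mul_div_cancel₀ _ hab']
  have hrot : ∀ ζ, f (rotation u ζ) = -f ζ := fun ζ => by
    simp only [f, rotation_apply, norm_mul, Circle.norm_coe, one_mul, map_mul, mul_pow]
    linear_combination (ζ ^ a * conj ζ ^ b * Complex.exp (-(c * ‖ζ‖ ^ 2))) * hu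
  have := (rotation u).measurePreserving.integral_comp
    (rotation u).toHomeomorph.measurableEmbedding f
  simp only [hrot, integral_neg] at this
  linear_combination -this / 2

theorem integral_pow_mul_conj_pow_mul_exp {c : ℝ} (hc : 0 < c) (a b : ℕ) :
    ∫ ζ : ℂ, ζ ^ a * conj ζ ^ b * Complex.exp (-(c * ‖ζ‖ ^ 2)) =
      if a = b then ((Real.pi * a ! / c ^ (a + 1) : ℝ) : ℂ) else 0 := by
  split_ifs with hab
  · subst hab
    have : ∀ ζ : ℂ, ζ ^ a * conj ζ ^ a * Complex.exp (-(c * ‖ζ‖ ^ 2)) =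
        ((‖ζ‖ ^ (2 * a) * Real.exp (-c * ‖ζ‖ ^ 2) : ℝ) : ℂ) := fun ζ => by
      rw [← mul_pow, Complex.mul_conj, ← Complex.sq_norm, pow_mul]
      push_cast
      ring_nf
    simp_rw [this]
    rw [integral_complex_ofReal, integral_norm_pow_mul_exp_neg_mul_sq hc]
  · exact integral_pow_mul_conj_pow_mul_exp_of_ne c hab

noncomputable def psiFactor (c : ℝ) (a : ℕ) (ζ : ℂ) : ℂ :=
  Real.sqrt (2 ^ a * c ^ (a + 1) / (Real.pi * a !)) * ζ ^ a * Complex.exp (-(c * ‖ζ‖ ^ 2))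

theorem psiFactor_conj (c : ℝ) (a : ℕ) (ζ : ℂ) :
    psiFactor c a (conj ζ) = conj (psiFactor c a ζ) := by
  simp [psiFactor, ← Complex.exp_conj]

theorem psi_eq_prod_psiFactor (n q : ℕ) (lam : Fin n → ℝ) (α : Fin n → ℕ) (z : Fin n → ℂ) :
    psi n q lam α z =
      ∏ i, psiFactor |lam i| (α i) (if (i : ℕ) < q then conj (z i) else z i) := by
  simp only [psi, psiFactor, Finset.prod_mul_distrib, apply_ite norm, Complex.norm_conj, ite_self]
  congr 1
  · rw [← Complex.ofReal_prod, ← Real.sqrt_prod _ fun i _ => by positivity,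
      Finset.prod_div_distrib, Finset.prod_mul_distrib, Finset.prod_mul_distrib,
      Finset.prod_pow_eq_pow_sum, Finset.prod_const, Finset.card_univ, Fintype.card_fin]
  · rw [← Complex.exp_sum]
    push_cast
    simp [Finset.sum_neg_distrib]

theorem integral_two_mul_psiFactor_mul_conj {c : ℝ} (hc : 0 < c) (a b : ℕ) :
    ∫ ζ : ℂ, 2 * (psiFactor c a ζ * conj (psiFactor c b ζ)) = if a = b then 1 else 0 := by
  set A : ℕ → ℝ := fun k => 2 ^ k * c ^ (k + 1) / (Real.pi * k !)
  have : ∀ ζ : ℂ, 2 * (psiFactor c a ζ * conj (psiFactor c b ζ)) =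
      ((2 * √(A a) * √(A b) : ℝ) : ℂ) *
        (ζ ^ a * conj ζ ^ b * Complex.exp (-((2 * c : ℝ) * ‖ζ‖ ^ 2))) := by
    intro ζ
    simp only [psiFactor, A, map_mul, map_pow, ← Complex.exp_conj, map_neg, Complex.conj_ofReal]
    have hexp : Complex.exp (-((2 * c : ℝ) * ‖ζ‖ ^ 2)) =
        Complex.exp (-(c * ‖ζ‖ ^ 2)) * Complex.exp (-(c * ‖ζ‖ ^ 2)) := by
      rw [← Complex.exp_add]
      push_cast
      ring_nf
    rw [hexp]
    push_cast
    ring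
  simp_rw [this]
  rw [integral_const_mul, integral_pow_mul_conj_pow_mul_exp (by positivity)]
  split_ifs with hab
  · subst hab
    rw [← Complex.ofReal_mul, mul_assoc 2, Real.mul_self_sqrt (by positivity)]
    norm_cast
    simp only [A]
    field_simp
    ring
  · simp

theorem integral_two_mul_psiFactor_ite_conj_mul_conj {c : ℝ} (hc : 0 < c) (p : Prop)
    [Decidable p] (a b : ℕ) :
    ∫ ζ : ℂ, 2 * (psiFactor c a (if p then conj ζ else ζ) *
      conj (psiFactor c b (if p then conj ζ else ζ))) = if a = b then 1 else 0 := by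
  by_cases hp : p
  · have : ∀ ζ : ℂ, 2 * (psiFactor c a (conj ζ) * conj (psiFactor c b (conj ζ))) =
        conj (2 * (psiFactor c a ζ * conj (psiFactor c b ζ))) := fun ζ => by
      simp only [psiFactor_conj, map_mul, map_ofNat, Complex.conj_conj]
    simp_rw [if_pos hp, this]
    rw [integral_conj, integral_two_mul_psiFactor_mul_conj hc]
    split_ifs <;> simp
  · simp_rw [if_neg hp]
    exact integral_two_mul_psiFactor_mul_conj hc a b

theorem psiFactor_mul_conj_psiFactor {c : ℝ} (hc : 0 ≤ c) (a : ℕ) (ζ ω : ℂ) :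
    psiFactor c a ζ * conj (psiFactor c a ω) =
      ((c / Real.pi : ℝ) : ℂ) * Complex.exp (-(c * (‖ζ‖ ^ 2 + ‖ω‖ ^ 2))) *
        ((2 * c * ζ * conj ω) ^ a / a !) := by
  have hsqrt : (√(2 ^ a * c ^ (a + 1) / (Real.pi * a !)) : ℂ) *
      √(2 ^ a * c ^ (a + 1) / (Real.pi * a !)) = ((2 ^ a * c ^ (a + 1) / (Real.pi * a !) : ℝ) : ℂ) := by
    rw [← Complex.ofReal_mul, Real.mul_self_sqrt (by positivity)]
  simp only [psiFactor, map_mul, map_pow, ← Complex.exp_conj, map_neg, Complex.conj_ofReal]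
  rw [show ∀ x y : ℂ, Complex.exp (-(c * (x + y))) = Complex.exp (-(c * x)) * Complex.exp (-(c * y))
    from fun x y => by rw [← Complex.exp_add]; ring_nf]
  push_cast at hsqrt ⊢
  linear_combination (ζ ^ a * conj ω ^ a * Complex.exp (-(c * ‖ζ‖ ^ 2)) *
    Complex.exp (-(c * ‖ω‖ ^ 2))) * hsqrt

theorem hasSum_psiFactor_mul_conj {c : ℝ} (hc : 0 ≤ c) (ζ ω : ℂ) :
    HasSum (fun a => psiFactor c a ζ * conj (psiFactor c a ω))
      (((c / Real.pi : ℝ) : ℂ) * Complex.exp (2 * c * ζ * conj ω - c * (‖ζ‖ ^ 2 + ‖ω‖ ^ 2))) := by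
  have := (NormedSpace.expSeries_div_hasSum_exp (2 * c * ζ * conj ω)).mul_left
    (((c / Real.pi : ℝ) : ℂ) * Complex.exp (-(c * (‖ζ‖ ^ 2 + ‖ω‖ ^ 2))))
  rw [← Complex.exp_eq_exp_ℂ, mul_assoc _ (Complex.exp _), ← Complex.exp_add,
    neg_add_eq_sub] at this
  simpa only [psiFactor_mul_conj_psiFactor hc] using this

theorem summable_norm_psiFactor_mul_conj {c : ℝ} (hc : 0 ≤ c) (ζ ω : ℂ) :
    Summable fun a => ‖psiFactor c a ζ * conj (psiFactor c a ω)‖ := by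
  simp_rw [psiFactor_mul_conj_psiFactor hc, norm_mul, norm_div, norm_pow, Complex.norm_natCast]
  exact (Real.summable_pow_div_factorial _).mul_left _

theorem integral_two_pow_mul_psi_mul_conj_psi (n q : ℕ) {lam : Fin n → ℝ}
    (hlam : ∀ i, lam i ≠ 0) (α β : Fin n → ℕ) :
    ∫ z : Fin n → ℂ, (2 : ℂ) ^ n * (psi n q lam α z * conj (psi n q lam β z)) =
      if α = β then 1 else 0 :=
  calc ∫ z : Fin n → ℂ, (2 : ℂ) ^ n * (psi n q lam α z * conj (psi n q lam β z))
      = ∫ z : Fin n → ℂ, ∏ i, 2 *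
          (psiFactor |lam i| (α i) (if (i : ℕ) < q then conj (z i) else z i) *
            conj (psiFactor |lam i| (β i) (if (i : ℕ) < q then conj (z i) else z i))) := by
        simp only [psi_eq_prod_psiFactor, map_prod, Finset.prod_mul_distrib, Finset.prod_const,
          Finset.card_univ, Fintype.card_fin]
    _ = ∏ i : Fin n, if α i = β i then (1 : ℂ) else 0 := by
        rw [integral_fintype_prod_volume_eq_prod (fun i ζ => 2 *
          (psiFactor |lam i| (α i) (if (i : ℕ) < q then conj ζ else ζ) *
            conj (psiFactor |lam i| (β i) (if (i : ℕ) < q then conj ζ else ζ))))]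
        simp only [integral_two_mul_psiFactor_ite_conj_mul_conj (abs_pos.2 (hlam _))]
    _ = if α = β then 1 else 0 := by simp only [Fintype.prod_boole, ← funext_iff]

theorem tsum_psi_mul_conj_psi (n q : ℕ) (lam : Fin n → ℝ) (z w : Fin n → ℂ) :
    ∑' α : Fin n → ℕ, psi n q lam α z * conj (psi n q lam α w) =
      ((|∏ i, lam i| / Real.pi ^ n : ℝ) : ℂ) *
        Complex.exp (2 * ((∑ i ∈ Finset.univ.filter (fun i : Fin n => (i : ℕ) < q),
              ((|lam i| : ℝ) : ℂ) * conj (z i) * w i)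
            + (∑ i ∈ Finset.univ.filter (fun i : Fin n => q ≤ (i : ℕ)),
              ((|lam i| : ℝ) : ℂ) * z i * conj (w i)))
          - ((∑ i, |lam i| * (‖z i‖ ^ 2 + ‖w i‖ ^ 2) : ℝ) : ℂ)) :=
  calc ∑' α : Fin n → ℕ, psi n q lam α z * conj (psi n q lam α w)
      = ∑' α : Fin n → ℕ, ∏ i,
          psiFactor |lam i| (α i) (if (i : ℕ) < q then conj (z i) else z i) *
            conj (psiFactor |lam i| (α i) (if (i : ℕ) < q then conj (w i) else w i)) := by
        simp only [psi_eq_prod_psiFactor, map_prod, Finset.prod_mul_distrib]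
    _ = ∏ i, ((|lam i| / Real.pi : ℝ) : ℂ) * Complex.exp
          (2 * |lam i| * (if (i : ℕ) < q then conj (z i) else z i) *
            conj (if (i : ℕ) < q then conj (w i) else w i) -
              |lam i| * (‖z i‖ ^ 2 + ‖w i‖ ^ 2)) := by
        rw [tsum_prod_pi _ fun i => summable_norm_psiFactor_mul_conj (abs_nonneg _) _ _]
        simp only [(hasSum_psiFactor_mul_conj (abs_nonneg _) _ _).tsum_eq, apply_ite norm,
          Complex.norm_conj, ite_self]
    _ = _ := by
        rw [Finset.prod_mul_distrib, ← Complex.exp_sum, ← Complex.ofReal_prod,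
          Finset.prod_div_distrib, Finset.prod_const, Finset.card_univ, Fintype.card_fin,
          ← Finset.abs_prod, Finset.sum_sub_distrib]
        push_cast
        congr 3
        calc _ = ∑ i : Fin n, if (i : ℕ) < q then 2 * (((|lam i| : ℝ) : ℂ) * conj (z i) * w i)
              else 2 * (((|lam i| : ℝ) : ℂ) * z i * conj (w i)) :=
              Finset.sum_congr rfl fun i _ => by
                rw [apply_ite conj, Complex.conj_conj]
                split_ifs <;> ring
          _ = _ := by simp only [Finset.sum_ite, not_lt, ← Finset.mul_sum, mul_add]

/-- if `λᵢ < 0` for `i ≤ q` and `λᵢ > 0` for `i > q`, the family `{Ψ_α}` is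
orthonormal in `L²(ℂⁿ, 2ⁿ dm)` and
`Σ_α Ψ_α(z) conj (Ψ_α(w)) = (|λ₁⋯λₙ|/πⁿ) e^{2(Σ_{i≤q}|λᵢ|z̄ⁱwⁱ + Σ_{i>q}|λᵢ|zⁱw̄ⁱ) − Σᵢ|λᵢ|(|zⁱ|²+|wⁱ|²)}`. -/
theorem stmt_12 (n q : ℕ) (lam : Fin n → ℝ)
    (hneg : ∀ i : Fin n, (i : ℕ) < q → lam i < 0)
    (hpos : ∀ i : Fin n, q ≤ (i : ℕ) → 0 < lam i) :
    (∀ α β : Fin n → ℕ,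
      ∫ z : Fin n → ℂ, (2 : ℂ) ^ n * (psi n q lam α z * (starRingEnd ℂ) (psi n q lam β z))
        = if α = β then 1 else 0) ∧
    (∀ z w : Fin n → ℂ,
      ∑' α : Fin n → ℕ, psi n q lam α z * (starRingEnd ℂ) (psi n q lam α w)
        = ((|∏ i, lam i| / Real.pi ^ n : ℝ) : ℂ) *
            Complex.exp
              (2 * ((∑ i ∈ Finset.univ.filter (fun i : Fin n => (i : ℕ) < q),
                        ((|lam i| : ℝ) : ℂ) * (starRingEnd ℂ) (z i) * w i)
                  + (∑ i ∈ Finset.univ.filter (fun i : Fin n => q ≤ (i : ℕ)),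
                        ((|lam i| : ℝ) : ℂ) * z i * (starRingEnd ℂ) (w i)))
                - ((∑ i, |lam i| * (‖z i‖ ^ 2 + ‖w i‖ ^ 2) : ℝ) : ℂ))) := by
  refine ⟨integral_two_pow_mul_psi_mul_conj_psi n q fun i => ?_, tsum_psi_mul_conj_psi n q lam⟩
  rcases lt_or_ge (i : ℕ) q with h | h
  exacts [(hneg i h).ne, (hpos i h).ne']
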